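/- arXiv:2412.05102 — 3 statements merged into one kernel-verified Lean document; each statement's English description precedes it below -/
import Mathlib

section
/- Let L be a linear endomorphism of a finite-dimensional vector space X, let R ⊆ V ⊆ X be subspaces with R being the smallest L-invariant subspace containing a set S, and let Π be a projection of X onto V factorized as Π = J ∘ R₀ with R₀ : X → W, J : W → X linear satisfying R₀ ∘ J = id_W. Then for every x ∈ span(S) and every t ≥ 0, exp(tL)(x) = J(exp(t · R₀∘L∘J)(R₀(x))). -/
/-!
Every vector of `span S` lies in the reachable subspace `R`, so its whole `L`-orbit stays in `V`,
where `J ∘ R₀` is the identity. Hence `R₀` intertwines the powers of `L` and of `F = R₀ ∘ L ∘ J`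
along that orbit, `J (F ^ n (R₀ x)) = L ^ n x`, and summing the exponential series gives the claim.
-/

open NormedSpace

section Compression

variable {K M N : Type*} [Semiring K] [AddCommMonoid M] [Module K M] [AddCommMonoid N] [Module K N]
  {L : Module.End K M} {P : M →ₗ[K] N} {J : N →ₗ[K] M} {V : Submodule K M} {x : M}

theorem pow_comp_comp_apply_of_pow_apply_mem (hfix : ∀ v ∈ V, J (P v) = v)
    (hx : ∀ n, (L ^ n) x ∈ V) (n : ℕ) : ((P ∘ₗ L ∘ₗ J) ^ n) (P x) = P ((L ^ n) x) := by
  induction n with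
  | zero => rfl
  | succ n ih =>
    rw [pow_succ', pow_succ', Module.End.mul_apply, Module.End.mul_apply, ih]
    simp only [LinearMap.comp_apply, hfix _ (hx n)]

theorem apply_pow_comp_comp_apply_of_pow_apply_mem (hfix : ∀ v ∈ V, J (P v) = v)
    (hx : ∀ n, (L ^ n) x ∈ V) (n : ℕ) : J (((P ∘ₗ L ∘ₗ J) ^ n) (P x)) = (L ^ n) x := by
  rw [pow_comp_comp_apply_of_pow_apply_mem hfix hx, hfix _ (hx n)]

end Compression

theorem LinearMap.toContinuousLinearMap_pow {𝕜 E : Type*} [NontriviallyNormedField 𝕜]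
    [CompleteSpace 𝕜] [NormedAddCommGroup E] [NormedSpace 𝕜 E] [FiniteDimensional 𝕜 E]
    (T : Module.End 𝕜 E) (n : ℕ) :
    LinearMap.toContinuousLinearMap T ^ n = LinearMap.toContinuousLinearMap (T ^ n) :=
  (map_pow (Module.End.toContinuousLinearMap E) T n).symm

theorem exp_apply_eq_tsum (𝕂 : Type*) {E : Type*} [RCLike 𝕂] [NormedAddCommGroup E]
    [NormedSpace 𝕂 E] [CompleteSpace E] (A : E →L[𝕂] E) (x : E) :
    exp A x = ∑' n : ℕ, (n.factorial⁻¹ : 𝕂) • (A ^ n) x := by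
  rw [exp_eq_tsum 𝕂]
  exact (ContinuousLinearMap.apply 𝕂 E x).map_tsum (expSeries_summable' A)

theorem exp_apply_eq_of_pow_apply_eq {𝕂 E F : Type*} [RCLike 𝕂]
    [NormedAddCommGroup E] [NormedSpace 𝕂 E] [CompleteSpace E]
    [NormedAddCommGroup F] [NormedSpace 𝕂 F] [CompleteSpace F]
    (A : E →L[𝕂] E) (B : F →L[𝕂] F) (C : F →L[𝕂] E) {x : E} {y : F}
    (h : ∀ n : ℕ, C ((B ^ n) y) = (A ^ n) x) : C (exp B y) = exp A x := by
  have hB : Summable fun n : ℕ => (n.factorial⁻¹ : 𝕂) • (B ^ n) y := by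
    simpa only [ContinuousLinearMap.apply_apply, smul_apply] using
      (ContinuousLinearMap.apply 𝕂 F y).summable (expSeries_summable' (𝕂 := 𝕂) B)
  rw [exp_apply_eq_tsum 𝕂, exp_apply_eq_tsum 𝕂, C.map_tsum hB]
  simp only [map_smul, h]

theorem stmt3_general {X W : Type*} [NormedAddCommGroup X] [NormedSpace ℂ X] [FiniteDimensional ℂ X]
    [NormedAddCommGroup W] [NormedSpace ℂ W] [FiniteDimensional ℂ W]
    (L : Module.End ℂ X) (S : Set X) (R V : Submodule ℂ X) (hRV : R ≤ V)
    (hR : IsLeast {U : Submodule ℂ X | (∀ x ∈ U, L x ∈ U) ∧ S ⊆ U} R)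
    (R₀ : X →ₗ[ℂ] W) (J : W →ₗ[ℂ] X)
    (hfix : ∀ v ∈ V, J (R₀ v) = v)
    (t : ℝ) (x : X) (hx : x ∈ Submodule.span ℂ S) :
    NormedSpace.exp ((t : ℂ) • LinearMap.toContinuousLinearMap (L : X →ₗ[ℂ] X)) x =
      J (NormedSpace.exp
          ((t : ℂ) • LinearMap.toContinuousLinearMap (R₀ ∘ₗ (L : X →ₗ[ℂ] X) ∘ₗ J)) (R₀ x)) := by
  have hxR : x ∈ R := Submodule.span_le.mpr hR.1.2 hx
  have horbit : ∀ n, (L ^ n) x ∈ V := fun n =>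
    hRV (Module.End.pow_apply_mem_of_forall_mem n hR.1.1 x hxR)
  refine (exp_apply_eq_of_pow_apply_eq _ _ (LinearMap.toContinuousLinearMap J) fun n => ?_).symm
  simp only [smul_pow, smul_apply, map_smul, LinearMap.toContinuousLinearMap_pow,
    LinearMap.coe_toContinuousLinearMap']
  exact congrArg _ (apply_pow_comp_comp_apply_of_pow_apply_mem hfix horbit n)

/-- Reachable-based linear model reduction: if `R ⊆ V` where `R` is the smallest `L`-invariant
subspace containing `S`, and `Π = J ∘ R₀` is a projection onto `V` with `R₀ ∘ J = id`, then
the full and the reduced evolutions agree on `span(S)`: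
`exp(tL)(x) = J(exp(t·R₀∘L∘J)(R₀(x)))`. -/
theorem stmt3 {X W : Type*} [NormedAddCommGroup X] [NormedSpace ℂ X] [FiniteDimensional ℂ X]
    [NormedAddCommGroup W] [NormedSpace ℂ W] [FiniteDimensional ℂ W]
    (L : Module.End ℂ X) (S : Set X) (R V : Submodule ℂ X) (hRV : R ≤ V)
    (hR : IsLeast {U : Submodule ℂ X | (∀ x ∈ U, L x ∈ U) ∧ S ⊆ U} R)
    (R₀ : X →ₗ[ℂ] W) (J : W →ₗ[ℂ] X)
    (hmem : ∀ x : X, J (R₀ x) ∈ V) (hfix : ∀ v ∈ V, J (R₀ v) = v)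
    (hRJ : R₀ ∘ₗ J = LinearMap.id)
    (t : ℝ) (ht : 0 ≤ t) (x : X) (hx : x ∈ Submodule.span ℂ S) :
    NormedSpace.exp ((t : ℂ) • LinearMap.toContinuousLinearMap (L : X →ₗ[ℂ] X)) x =
      J (NormedSpace.exp
          ((t : ℂ) • LinearMap.toContinuousLinearMap (R₀ ∘ₗ (L : X →ₗ[ℂ] X) ∘ₗ J)) (R₀ x)) :=
  stmt3_general L S R V hRV hR R₀ J hfix t x hx
end

section
/- Let Φ be a subset of M_n(ℂ) containing the identity matrix. Then the double commutant Φ'' equals the subalgebra generated by Φ, i.e., Φ'' = alg(Φ). -/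
open scoped Matrix Kronecker

noncomputable section BiComm
variable {n : ℕ}

/-- amplification `1 ⊗ A` acting on `ℂ^{n×n}`. -/
def ampM (A : Matrix (Fin n) (Fin n) ℂ) : Matrix (Fin n × Fin n) (Fin n × Fin n) ℂ :=
  (1 : Matrix (Fin n) (Fin n) ℂ) ⊗ₖ A

lemma ampM_apply (A : Matrix (Fin n) (Fin n) ℂ) (p q : Fin n × Fin n) :
    ampM A p q = (if p.1 = q.1 then A p.2 q.2 else 0) := by
  simp [ampM, Matrix.kroneckerMap_apply, Matrix.one_apply, ite_mul]

def rho (A : Matrix (Fin n) (Fin n) ℂ) :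
    EuclideanSpace ℂ (Fin n × Fin n) →ₗ[ℂ] EuclideanSpace ℂ (Fin n × Fin n) :=
  Matrix.toEuclideanLin (ampM A)

def gmap : Matrix (Fin n) (Fin n) ℂ →ₗ[ℂ] EuclideanSpace ℂ (Fin n × Fin n) where
  toFun S := (WithLp.equiv 2 _).symm (fun p : Fin n × Fin n => S p.2 p.1)
  map_add' S T := rfl
  map_smul' c S := rfl

lemma gmap_apply (S : Matrix (Fin n) (Fin n) ℂ) (p : Fin n × Fin n) :
    gmap S p = S p.2 p.1 := rfl

lemma gmap_inj : Function.Injective (gmap (n := n)) := by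
  intro S T h
  ext j i
  have := congrFun (congrArg (WithLp.equiv 2 _) h) (i, j)
  simpa [gmap_apply] using this

lemma rho_gmap (A S : Matrix (Fin n) (Fin n) ℂ) :
    rho A (gmap S) = gmap (A * S) := by
  apply (WithLp.equiv 2 _).injective
  funext p
  simp only [rho, Matrix.toEuclideanLin_apply, WithLp.equiv_symm_apply, PiLp.toLp_apply, gmap,
    LinearMap.coe_mk, AddHom.coe_mk, Equiv.apply_symm_apply]
  show (ampM A *ᵥ fun q : Fin n × Fin n => S q.2 q.1) p = (A * S) p.2 p.1
  simp [Matrix.mulVec, dotProduct, ampM_apply, Fintype.sum_prod_type, ite_mul,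
    Matrix.mul_apply]

lemma ampM_conjTranspose (A : Matrix (Fin n) (Fin n) ℂ) : ampM Aᴴ = (ampM A)ᴴ := by
  ext p q
  simp only [ampM_apply, Matrix.conjTranspose_apply, apply_ite (star : ℂ → ℂ), star_zero]
  congr 1
  · exact propext eq_comm

lemma rho_adjoint (A : Matrix (Fin n) (Fin n) ℂ) :
    LinearMap.adjoint (rho A) = rho Aᴴ := by
  rw [rho, rho, ampM_conjTranspose, Matrix.toEuclideanLin_conjTranspose_eq_adjoint]

lemma proj_comm (U : Submodule ℂ (EuclideanSpace ℂ (Fin n × Fin n)))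
    (T : EuclideanSpace ℂ (Fin n × Fin n) →ₗ[ℂ] EuclideanSpace ℂ (Fin n × Fin n))
    (hT : ∀ u ∈ U, T u ∈ U) (hT' : ∀ u ∈ U, (LinearMap.adjoint T) u ∈ U)
    (w : EuclideanSpace ℂ (Fin n × Fin n)) :
    (U.orthogonalProjectionOnto (T w) : EuclideanSpace ℂ (Fin n × Fin n))
      = T (U.orthogonalProjectionOnto w) := by
  set u : EuclideanSpace ℂ (Fin n × Fin n) := ↑(U.orthogonalProjectionOnto w) with hu
  have hmem : u ∈ U := (U.orthogonalProjectionOnto w).2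
  have hperp : w - u ∈ Uᗮ := Submodule.sub_starProjection_mem_orthogonal (K := U) w
  have hTperp : T (w - u) ∈ Uᗮ := by
    rw [Submodule.mem_orthogonal]
    intro x hx
    rw [← LinearMap.adjoint_inner_left]
    exact (Submodule.mem_orthogonal U (w - u)).1 hperp _ (hT' x hx)
  have : T w = T u + T (w - u) := by rw [← map_add]; congr 1; abel
  rw [this, map_add]
  push_cast
  rw [show ((U.orthogonalProjectionOnto (T u) : U) : EuclideanSpace ℂ (Fin n × Fin n)) = T u
      from Submodule.starProjection_eq_self_iff.2 (hT u hmem),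
    Submodule.orthogonalProjectionOnto_apply_of_mem_orthogonal hTperp]
  simp

lemma toEuc_mul (M N : Matrix (Fin n × Fin n) (Fin n × Fin n) ℂ) :
    Matrix.toEuclideanLin (M * N)
      = (Matrix.toEuclideanLin M).comp (Matrix.toEuclideanLin N) := by
  apply LinearMap.ext
  intro v
  apply (WithLp.equiv 2 _).injective
  simp [Matrix.toEuclideanLin_apply, Matrix.mulVec_mulVec]

lemma mul_ampM_apply (Q : Matrix (Fin n × Fin n) (Fin n × Fin n) ℂ)
    (A : Matrix (Fin n) (Fin n) ℂ) (i j k l : Fin n) :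
    (Q * ampM A) (i, j) (k, l) = ∑ v, Q (i, j) (k, v) * A v l := by
  rw [Matrix.mul_apply]
  rw [Fintype.sum_prod_type]
  rw [Finset.sum_comm]
  simp [ampM_apply, mul_ite, Finset.sum_ite_eq, Finset.sum_ite_eq']

lemma ampM_mul_apply (Q : Matrix (Fin n × Fin n) (Fin n × Fin n) ℂ)
    (A : Matrix (Fin n) (Fin n) ℂ) (i j k l : Fin n) :
    (ampM A * Q) (i, j) (k, l) = ∑ v, A j v * Q (i, v) (k, l) := by
  rw [Matrix.mul_apply, Fintype.sum_prod_type]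
  simp [ampM_apply, ite_mul, Finset.sum_ite_eq, Finset.sum_ite_eq']

lemma comm_blocks (Φ : Set (Matrix (Fin n) (Fin n) ℂ))
    (T : Matrix (Fin n) (Fin n) ℂ) (hT : T ∈ Set.centralizer (Set.centralizer Φ))
    (Q : Matrix (Fin n × Fin n) (Fin n × Fin n) ℂ)
    (hQ : ∀ A ∈ Φ, Q * ampM A = ampM A * Q) :
    Q * ampM T = ampM T * Q := by
  have hblock : ∀ i k : Fin n,
      (Matrix.of fun j l => Q (i, j) (k, l)) ∈ Set.centralizer Φ := by
    intro i k
    rw [Set.mem_centralizer_iff]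
    intro A hA
    ext j l
    have h := congrFun (congrFun (hQ A hA) (i, j)) (k, l)
    rw [mul_ampM_apply, ampM_mul_apply] at h
    simp only [Matrix.mul_apply, Matrix.of_apply]
    exact h.symm
  ext ⟨i, j⟩ ⟨k, l⟩
  rw [mul_ampM_apply, ampM_mul_apply]
  have h := hT _ (hblock i k)
  have h' := congrFun (congrFun h j) l
  simp only [Matrix.mul_apply, Matrix.of_apply] at h'
  exact h'

end BiComm

/-- Finite-dimensional bicommutant theorem: for a self-adjoint set `Φ ⊆ Mₙ(ℂ)` containing the
identity, the double commutant `Φ''` equals the subalgebra generated by `Φ`. -/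
theorem stmt7 (n : ℕ) (Φ : Set (Matrix (Fin n) (Fin n) ℂ))
    (hone : (1 : Matrix (Fin n) (Fin n) ℂ) ∈ Φ)
    (hstar : ∀ A ∈ Φ, Aᴴ ∈ Φ) :
    Set.centralizer (Set.centralizer Φ) =
      ↑(Algebra.adjoin ℂ Φ) := by
  apply Set.Subset.antisymm
  · -- hard direction
    intro T hT
    set U : Submodule ℂ (EuclideanSpace ℂ (Fin n × Fin n)) :=
      (Subalgebra.toSubmodule (Algebra.adjoin ℂ Φ)).map gmap with hU
    have hinv : ∀ A ∈ Φ, ∀ u ∈ U, rho A u ∈ U := by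
      rintro A hA u ⟨S, hS, rfl⟩
      rw [SetLike.mem_coe, Subalgebra.mem_toSubmodule _] at hS
      exact ⟨A * S, (Subalgebra.mem_toSubmodule _).2
        (mul_mem (Algebra.subset_adjoin hA) hS), (rho_gmap A S).symm⟩
    have hinv' : ∀ A ∈ Φ, ∀ u ∈ U, LinearMap.adjoint (rho A) u ∈ U := by
      intro A hA u hu
      rw [rho_adjoint]
      exact hinv Aᴴ (hstar A hA) u hu
    set P : EuclideanSpace ℂ (Fin n × Fin n) →ₗ[ℂ] EuclideanSpace ℂ (Fin n × Fin n) :=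
      U.subtype.comp (U.orthogonalProjectionOnto).toLinearMap with hPdef
    have hPapp : ∀ w, P w = ↑(U.orthogonalProjectionOnto w) := fun w => rfl
    have hPA : ∀ A ∈ Φ, P.comp (rho A) = (rho A).comp P := by
      intro A hA
      apply LinearMap.ext
      intro w
      simp only [LinearMap.comp_apply, hPapp]
      exact proj_comm U (rho A) (hinv A hA) (hinv' A hA) w
    set Q : Matrix (Fin n × Fin n) (Fin n × Fin n) ℂ :=
      Matrix.toEuclideanLin.symm P with hQdef
    have hP : P = Matrix.toEuclideanLin Q := (Matrix.toEuclideanLin.apply_symm_apply P).symm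
    have hQA : ∀ A ∈ Φ, Q * ampM A = ampM A * Q := by
      intro A hA
      apply Matrix.toEuclideanLin.injective
      rw [toEuc_mul, toEuc_mul, ← hP]
      exact hPA A hA
    have hQT : Q * ampM T = ampM T * Q := comm_blocks Φ T hT Q hQA
    have hPT : P.comp (rho T) = (rho T).comp P := by
      rw [hP]
      show (Matrix.toEuclideanLin Q).comp (Matrix.toEuclideanLin (ampM T)) = _
      rw [← toEuc_mul, hQT, toEuc_mul]
      rfl
    have hv : gmap (1 : Matrix (Fin n) (Fin n) ℂ) ∈ U :=
      ⟨1, one_mem (Algebra.adjoin ℂ Φ), rfl⟩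
    have hPv : P (gmap 1) = gmap 1 := by
      rw [hPapp]
      exact Submodule.starProjection_eq_self_iff.2 hv
    have hrT : rho T (gmap 1) = gmap T := by rw [rho_gmap, mul_one]
    have hTU : gmap T ∈ U := by
      have h1 := LinearMap.congr_fun hPT (gmap 1)
      simp only [LinearMap.comp_apply, hPv, hrT] at h1
      rw [← h1, hPapp]
      exact (U.orthogonalProjectionOnto (gmap T)).2
    obtain ⟨S, hS, hSeq⟩ := hTU
    have hST : S = T := gmap_inj hSeq
    rw [← hST]
    exact hS
  · -- easy direction
    intro x hx
    have hle : Algebra.adjoin ℂ Φ ≤ Subalgebra.centralizer ℂ (Set.centralizer Φ) :=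
      Algebra.adjoin_le fun a ha => Set.subset_centralizer_centralizer ha
    have := hle hx
    rwa [Subalgebra.mem_centralizer_iff] at this
end

section
/- Let A ⊆ M_n(ℂ) be a *-subalgebra with center Z(A) = A ∩ A'. Then the orthogonal complement of Z(A) inside A (with respect to the Hilbert–Schmidt inner product) is orthogonal to the commutant A': for every X ∈ A with X ⊥ Z(A) and every Y ∈ A', tr(X†Y) = 0. -/
open scoped Matrix

noncomputable section

private def matEquiv (n : ℕ) : Matrix (Fin n) (Fin n) ℂ ≃ₗ[ℂ] EuclideanSpace ℂ (Fin n × Fin n) where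
  toFun M := WithLp.toLp 2 (fun p => M p.1 p.2)
  invFun v := Matrix.of fun i j => v (i, j)
  map_add' _ _ := rfl
  map_smul' _ _ := rfl
  left_inv _ := rfl
  right_inv _ := rfl

private lemma inner_matEquiv (n : ℕ) (M N : Matrix (Fin n) (Fin n) ℂ) :
    (inner ℂ (matEquiv n M) (matEquiv n N) : ℂ) = (Mᴴ * N).trace := by
  simp only [PiLp.inner_apply, RCLike.inner_apply', matEquiv, LinearEquiv.coe_mk,
    Matrix.trace, Matrix.diag, Matrix.mul_apply, Matrix.conjTranspose_apply,
    Fintype.sum_prod_type]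
  rw [Finset.sum_comm]; rfl

end

/-- For a *-subalgebra `A ⊆ Mₙ(ℂ)` with center `Z(A) = A ∩ A'`: every `X ∈ A` which is
Hilbert–Schmidt-orthogonal to `Z(A)` is orthogonal to the commutant `A'`. -/
theorem stmt9 (n : ℕ) (A : StarSubalgebra ℂ (Matrix (Fin n) (Fin n) ℂ))
    (X : Matrix (Fin n) (Fin n) ℂ) (hXA : X ∈ A)
    (hXZ : ∀ Z ∈ A, (∀ B ∈ A, Z * B = B * Z) → (Xᴴ * Z).trace = 0)
    (Y : Matrix (Fin n) (Fin n) ℂ) (hY : ∀ B ∈ A, Y * B = B * Y) :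
    (Xᴴ * Y).trace = 0 := by
  set e := matEquiv n with he
  set S : Submodule ℂ (EuclideanSpace ℂ (Fin n × Fin n)) :=
    (Subalgebra.toSubmodule A.toSubalgebra).map e.toLinearMap with hS
  have memS : ∀ M : Matrix (Fin n) (Fin n) ℂ, M ∈ A → e M ∈ S := by
    intro M hM
    exact ⟨M, hM, rfl⟩
  have hstar : ∀ B : Matrix (Fin n) (Fin n) ℂ, B ∈ A → Bᴴ ∈ A := by
    intro B hB
    simpa [Matrix.star_eq_conjTranspose] using star_mem (s := A) hB
  set Z : Matrix (Fin n) (Fin n) ℂ := e.symm (Submodule.orthogonalProjectionOnto S (e Y)) with hZdef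
  have hZA : Z ∈ A := by
    obtain ⟨M, hM, hMe⟩ := (Submodule.orthogonalProjectionOnto S (e Y)).2
    have : Z = M := by
      rw [hZdef, ← hMe]; exact e.symm_apply_apply M
    rwa [this]
  set W : Matrix (Fin n) (Fin n) ℂ := Y - Z with hWdef
  have heW : e W ∈ Sᗮ := by
    have : e W = e Y - Submodule.orthogonalProjectionOnto S (e Y) := by
      rw [hWdef, map_sub, hZdef, e.apply_symm_apply]
    rw [this]
    exact Submodule.sub_starProjection_mem_orthogonal (K := S) (e Y)
  have hleft : ∀ B ∈ A, ∀ V : Matrix (Fin n) (Fin n) ℂ, e V ∈ Sᗮ → e (B * V) ∈ Sᗮ := by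
    intro B hB V hV
    rw [Submodule.mem_orthogonal]
    rintro u ⟨M, hM, rfl⟩
    have hM' : M ∈ A := hM
    have key : (inner ℂ (e.toLinearMap M) (e (B * V)) : ℂ)
        = inner ℂ (e (Bᴴ * M)) (e V) := by
      simp only [LinearEquiv.coe_coe, he, inner_matEquiv]
      rw [Matrix.conjTranspose_mul, Matrix.conjTranspose_conjTranspose, Matrix.mul_assoc]
    rw [key]
    exact (Submodule.mem_orthogonal S (e V)).1 hV _ (memS _ (mul_mem (hstar B hB) hM'))
  have hright : ∀ B ∈ A, ∀ V : Matrix (Fin n) (Fin n) ℂ, e V ∈ Sᗮ → e (V * B) ∈ Sᗮ := by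
    intro B hB V hV
    rw [Submodule.mem_orthogonal]
    rintro u ⟨M, hM, rfl⟩
    have hM' : M ∈ A := hM
    have key : (inner ℂ (e.toLinearMap M) (e (V * B)) : ℂ)
        = inner ℂ (e (M * Bᴴ)) (e V) := by
      simp only [LinearEquiv.coe_coe, he, inner_matEquiv]
      rw [Matrix.conjTranspose_mul, Matrix.conjTranspose_conjTranspose, ← Matrix.mul_assoc]
      exact Matrix.trace_mul_cycle Mᴴ V B
    rw [key]
    exact (Submodule.mem_orthogonal S (e V)).1 hV _ (memS _ (mul_mem hM' (hstar B hB)))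
  have hZcentral : ∀ B ∈ A, Z * B = B * Z := by
    intro B hB
    have h1 : e (Z * B - B * Z) ∈ S :=
      memS _ (sub_mem (mul_mem hZA hB) (mul_mem hB hZA))
    have h2 : e (Z * B - B * Z) ∈ Sᗮ := by
      have hcomm : Z * B - B * Z = B * W - W * B := by
        have hyb : Y * B = B * Y := hY B hB
        rw [hWdef, Matrix.mul_sub, Matrix.sub_mul, hyb]
        abel
      rw [hcomm, map_sub]
      exact Submodule.sub_mem _ (hleft B hB W heW) (hright B hB W heW)
    have h0 : e (Z * B - B * Z) = 0 := by
      have hmem : e (Z * B - B * Z) ∈ S ⊓ Sᗮ := Submodule.mem_inf.2 ⟨h1, h2⟩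
      rw [Submodule.inf_orthogonal_eq_bot] at hmem
      simpa using hmem
    have hz : Z * B - B * Z = 0 := by
      have := e.injective (a₁ := Z * B - B * Z) (a₂ := 0) (by rw [h0, map_zero])
      exact this
    exact sub_eq_zero.1 hz
  have hdecomp : (Xᴴ * Y).trace = (Xᴴ * Z).trace + (Xᴴ * W).trace := by
    rw [hWdef, Matrix.mul_sub, Matrix.trace_sub]; ring
  rw [hdecomp, hXZ Z hZA hZcentral]
  have hw : (Xᴴ * W).trace = 0 := by
    rw [← inner_matEquiv, ← he]
    exact (Submodule.mem_orthogonal S (e W)).1 heW _ (memS _ hXA)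
  rw [hw, zero_add]
end
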